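/- arXiv:1401.7725 — 5 statements merged into one kernel-verified Lean document; each statement's English description precedes it below -/
import Mathlib

section
/- Let g be a Lie triple system over a field F with char F ≠ 2, 3 and (V,θ) a representation of g with D(x,y) := θ(y,x) − θ(x,y). On Hom(g,V) define [(x1,x2),φ]_L(w) := D(x1,x2)φ(w) − φ([x1,x2,w]) and [φ,(x1,x2)]_R(w) := φ([x1,x2,w]) − D(x1,x2)φ(w) + θ(x1,w)φ(x2) − θ(x2,w)φ(x1). Then for all x1,x2,y1,y2 ∈ g and all linear φ : g → V the following three identities hold (so Hom(g,V) is a representation of the Leibniz algebra of fundamental objects): (LLM) [([x1,x2,y1],y2),φ]_L + [(y1,[x1,x2,y2]),φ]_L = [(x1,x2),[(y1,y2),φ]_L]_L − [(y1,y2),[(x1,x2),φ]_L]_L; (MLL) [φ,([x1,x2,y1],y2)]_R + [φ,(y1,[x1,x2,y2])]_R = [[φ,(x1,x2)]_R,(y1,y2)]_R + [(x1,x2),[φ,(y1,y2)]_R]_L; (LML) [(x1,x2),[φ,(y1,y2)]_R]_L = [[(x1,x2),φ]_L,(y1,y2)]_R + [φ,([x1,x2,y1],y2)]_R + [φ,(y1,[x1,x2,y2])]_R.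 -/
/-- `Dop θ x y = θ(y,x) − θ(x,y)` for a bilinear `θ : g × g → End(V)`. -/
def Dop {F : Type*} [Field F] {g V : Type*} [AddCommGroup g] [Module F g]
    [AddCommGroup V] [Module F V]
    (θ : g →ₗ[F] g →ₗ[F] Module.End F V) (x y : g) : Module.End F V :=
  θ y x - θ x y

/-- Left action `[(x1,x2),φ]_L(w) = D(x1,x2)φ(w) − φ([x1,x2,w])` on maps `g → V`. -/
def actL {F : Type*} [Field F] {g V : Type*} [AddCommGroup g] [Module F g]
    [AddCommGroup V] [Module F V]
    (t : g →ₗ[F] g →ₗ[F] g →ₗ[F] g)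
    (θ : g →ₗ[F] g →ₗ[F] Module.End F V) (x1 x2 : g) (φ : g → V) : g → V :=
  fun w => Dop θ x1 x2 (φ w) - φ (t x1 x2 w)

/-- Right action
`[φ,(x1,x2)]_R(w) = φ([x1,x2,w]) − D(x1,x2)φ(w) + θ(x1,w)φ(x2) − θ(x2,w)φ(x1)`. -/
def actR {F : Type*} [Field F] {g V : Type*} [AddCommGroup g] [Module F g]
    [AddCommGroup V] [Module F V]
    (t : g →ₗ[F] g →ₗ[F] g →ₗ[F] g)
    (θ : g →ₗ[F] g →ₗ[F] Module.End F V) (x1 x2 : g) (φ : g → V) : g → V :=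
  fun w => φ (t x1 x2 w) - Dop θ x1 x2 (φ w) + θ x1 w (φ x2) - θ x2 w (φ x1)

/-
The left action is the commutator action of the pair `(D(x1,x2), [x1,x2,·])` on `Hom(g,V)`,
so (LLM) holds because both `D` and `[x1,x2,·]` carry the bracket of fundamental objects to
commutators: this is (R1), respectively the fundamental identity. (LML) is a direct computation
from the same two facts. For (MLL), `[(x1,x2),φ]_L + [φ,(x1,x2)]_R` is the map
`w ↦ θ(x1,w)φ(x2) − θ(x2,w)φ(x1)`, and (R2) says precisely that the right action kills every
map `w ↦ θ(x,w)v`; hence (MLL) reduces to (LML).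
-/

section

variable {F : Type*} [Field F] {g V : Type*} [AddCommGroup g] [Module F g]
  [AddCommGroup V] [Module F V]
  {t : g →ₗ[F] g →ₗ[F] g →ₗ[F] g} {θ : g →ₗ[F] g →ₗ[F] Module.End F V}

theorem actL_apply (x1 x2 : g) (φ : g → V) (w : g) :
    actL t θ x1 x2 φ w = Dop θ x1 x2 (φ w) - φ (t x1 x2 w) := rfl

theorem actR_apply (x1 x2 : g) (φ : g → V) (w : g) :
    actR t θ x1 x2 φ w =
      φ (t x1 x2 w) - Dop θ x1 x2 (φ w) + θ x1 w (φ x2) - θ x2 w (φ x1) := rfl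

theorem actR_add (x1 x2 : g) (φ ψ : g → V) :
    actR t θ x1 x2 (φ + ψ) = actR t θ x1 x2 φ + actR t θ x1 x2 ψ := by
  funext w
  simp only [actR_apply, Pi.add_apply, map_add]
  abel

theorem actR_sub (x1 x2 : g) (φ ψ : g → V) :
    actR t θ x1 x2 (φ - ψ) = actR t θ x1 x2 φ - actR t θ x1 x2 ψ := by
  funext w
  simp only [actR_apply, Pi.sub_apply, map_sub]
  abel

theorem actL_add_actR (x1 x2 : g) (φ : g → V) :
    actL t θ x1 x2 φ + actR t θ x1 x2 φ = fun w => θ x1 w (φ x2) - θ x2 w (φ x1) := by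
  funext w
  simp only [actL_apply, actR_apply, Pi.add_apply]
  abel

theorem actR_theta_eq_zero
    (hR2 : ∀ x1 y1 y2 y3 : g,
      θ x1 (t y1 y2 y3) = θ y2 y3 * θ x1 y1 - θ y1 y3 * θ x1 y2 + Dop θ y1 y2 * θ x1 y3)
    (y1 y2 x : g) (v : V) :
    actR t θ y1 y2 (fun w => θ x w v) = 0 := by
  funext w
  rw [actR_apply, hR2]
  simp only [LinearMap.add_apply, LinearMap.sub_apply, Module.End.mul_apply, Pi.zero_apply]
  abel

theorem Dop_commutator
    (hR1 : ∀ x1 x2 y1 y2 : g,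
      Dop θ x1 x2 * θ y1 y2 - θ y1 y2 * Dop θ x1 x2 = θ (t x1 x2 y1) y2 + θ y1 (t x1 x2 y2))
    (x1 x2 y1 y2 : g) :
    Dop θ x1 x2 * Dop θ y1 y2 - Dop θ y1 y2 * Dop θ x1 x2 =
      Dop θ (t x1 x2 y1) y2 + Dop θ y1 (t x1 x2 y2) := by
  simp only [Dop] at hR1 ⊢
  linear_combination (norm := skip) hR1 x1 x2 y2 y1 - hR1 x1 x2 y1 y2
  noncomm_ring

variable
    (hfund : ∀ x y a b c : g,
      t x y (t a b c) = t (t x y a) b c + t a (t x y b) c + t a b (t x y c))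
    (hR1 : ∀ x1 x2 y1 y2 : g,
      Dop θ x1 x2 * θ y1 y2 - θ y1 y2 * Dop θ x1 x2 = θ (t x1 x2 y1) y2 + θ y1 (t x1 x2 y2))
include hfund hR1

theorem actL_bracket (x1 x2 y1 y2 : g) (φ : g →ₗ[F] V) :
    actL t θ (t x1 x2 y1) y2 φ + actL t θ y1 (t x1 x2 y2) φ =
      actL t θ x1 x2 (actL t θ y1 y2 φ) - actL t θ y1 y2 (actL t θ x1 x2 φ) := by
  funext w
  have hD := LinearMap.congr_fun (Dop_commutator hR1 x1 x2 y1 y2) (φ w)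
  have hT := congrArg φ (hfund x1 x2 y1 y2 w)
  simp only [LinearMap.sub_apply, LinearMap.add_apply, Module.End.mul_apply] at hD
  simp only [map_add] at hT
  simp only [actL_apply, Pi.add_apply, Pi.sub_apply, map_sub]
  linear_combination (norm := module) hT - hD

theorem actL_actR (x1 x2 y1 y2 : g) (φ : g →ₗ[F] V) :
    actL t θ x1 x2 (actR t θ y1 y2 φ) =
      actR t θ y1 y2 (actL t θ x1 x2 φ) + actR t θ (t x1 x2 y1) y2 φ +
        actR t θ y1 (t x1 x2 y2) φ := by
  funext w
  have hD := LinearMap.congr_fun (Dop_commutator hR1 x1 x2 y1 y2) (φ w)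
  have hθ (a : g) (v : V) := LinearMap.congr_fun (hR1 x1 x2 a w) v
  have hT := congrArg φ (hfund x1 x2 y1 y2 w)
  simp only [LinearMap.sub_apply, LinearMap.add_apply, Module.End.mul_apply] at hD hθ
  simp only [map_add] at hT
  simp only [actL_apply, actR_apply, Pi.add_apply, map_sub, map_add]
  linear_combination (norm := module) -hD + hθ y1 (φ y2) - hθ y2 (φ y1) + hT

theorem actR_bracket
    (hR2 : ∀ x1 y1 y2 y3 : g,
      θ x1 (t y1 y2 y3) = θ y2 y3 * θ x1 y1 - θ y1 y3 * θ x1 y2 + Dop θ y1 y2 * θ x1 y3)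
    (x1 x2 y1 y2 : g) (φ : g →ₗ[F] V) :
    actR t θ (t x1 x2 y1) y2 φ + actR t θ y1 (t x1 x2 y2) φ =
      actR t θ y1 y2 (actR t θ x1 x2 φ) + actL t θ x1 x2 (actR t θ y1 y2 φ) := by
  have hsym : actR t θ y1 y2 (actR t θ x1 x2 φ) + actR t θ y1 y2 (actL t θ x1 x2 φ) = 0 := by
    rw [← actR_add, add_comm, actL_add_actR, ← Pi.sub_def (fun w => θ x1 w (φ x2)), actR_sub,
      actR_theta_eq_zero hR2, actR_theta_eq_zero hR2, sub_zero]
  rw [actL_actR hfund hR1]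
  linear_combination (norm := abel) -hsym

end

theorem hom_is_leibniz_rep_general {F : Type*} [Field F]
    {g : Type*} [AddCommGroup g] [Module F g]
    (t : g →ₗ[F] g →ₗ[F] g →ₗ[F] g)
    (hfund : ∀ x y a b c : g,
      t x y (t a b c) = t (t x y a) b c + t a (t x y b) c + t a b (t x y c))
    {V : Type*} [AddCommGroup V] [Module F V]
    (θ : g →ₗ[F] g →ₗ[F] Module.End F V)
    (hR1 : ∀ x1 x2 y1 y2 : g,
      Dop θ x1 x2 * θ y1 y2 - θ y1 y2 * Dop θ x1 x2 =
        θ (t x1 x2 y1) y2 + θ y1 (t x1 x2 y2))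
    (hR2 : ∀ x1 y1 y2 y3 : g,
      θ x1 (t y1 y2 y3) =
        θ y2 y3 * θ x1 y1 - θ y1 y3 * θ x1 y2 + Dop θ y1 y2 * θ x1 y3) :
    ∀ (x1 x2 y1 y2 : g) (φ : g →ₗ[F] V),
      -- (LLM)
      (actL t θ (t x1 x2 y1) y2 ⇑φ + actL t θ y1 (t x1 x2 y2) ⇑φ =
        actL t θ x1 x2 (actL t θ y1 y2 ⇑φ) - actL t θ y1 y2 (actL t θ x1 x2 ⇑φ)) ∧
      -- (MLL)
      (actR t θ (t x1 x2 y1) y2 ⇑φ + actR t θ y1 (t x1 x2 y2) ⇑φ =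
        actR t θ y1 y2 (actR t θ x1 x2 ⇑φ) + actL t θ x1 x2 (actR t θ y1 y2 ⇑φ)) ∧
      -- (LML)
      (actL t θ x1 x2 (actR t θ y1 y2 ⇑φ) =
        actR t θ y1 y2 (actL t θ x1 x2 ⇑φ) + actR t θ (t x1 x2 y1) y2 ⇑φ +
          actR t θ y1 (t x1 x2 y2) ⇑φ) := by
  intro x1 x2 y1 y2 φ
  exact ⟨actL_bracket hfund hR1 x1 x2 y1 y2 φ, actR_bracket hfund hR1 hR2 x1 x2 y1 y2 φ,
    actL_actR hfund hR1 x1 x2 y1 y2 φ⟩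

theorem hom_is_leibniz_rep {F : Type*} [Field F]
    (hchar2 : (2 : F) ≠ 0) (hchar3 : (3 : F) ≠ 0)
    {g : Type*} [AddCommGroup g] [Module F g]
    (t : g →ₗ[F] g →ₗ[F] g →ₗ[F] g)
    (hskew : ∀ x y : g, t x x y = 0)
    (hjac : ∀ x y z : g, t x y z + t y z x + t z x y = 0)
    (hfund : ∀ x y a b c : g,
      t x y (t a b c) = t (t x y a) b c + t a (t x y b) c + t a b (t x y c))
    {V : Type*} [AddCommGroup V] [Module F V]
    (θ : g →ₗ[F] g →ₗ[F] Module.End F V)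
    (hR1 : ∀ x1 x2 y1 y2 : g,
      Dop θ x1 x2 * θ y1 y2 - θ y1 y2 * Dop θ x1 x2 =
        θ (t x1 x2 y1) y2 + θ y1 (t x1 x2 y2))
    (hR2 : ∀ x1 y1 y2 y3 : g,
      θ x1 (t y1 y2 y3) =
        θ y2 y3 * θ x1 y1 - θ y1 y3 * θ x1 y2 + Dop θ y1 y2 * θ x1 y3) :
    ∀ (x1 x2 y1 y2 : g) (φ : g →ₗ[F] V),
      -- (LLM)
      (actL t θ (t x1 x2 y1) y2 ⇑φ + actL t θ y1 (t x1 x2 y2) ⇑φ =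
        actL t θ x1 x2 (actL t θ y1 y2 ⇑φ) - actL t θ y1 y2 (actL t θ x1 x2 ⇑φ)) ∧
      -- (MLL)
      (actR t θ (t x1 x2 y1) y2 ⇑φ + actR t θ y1 (t x1 x2 y2) ⇑φ =
        actR t θ y1 y2 (actR t θ x1 x2 ⇑φ) + actL t θ x1 x2 (actR t θ y1 y2 ⇑φ)) ∧
      -- (LML)
      (actL t θ x1 x2 (actR t θ y1 y2 ⇑φ) =
        actR t θ y1 y2 (actL t θ x1 x2 ⇑φ) + actR t θ (t x1 x2 y1) y2 ⇑φ +
          actR t θ y1 (t x1 x2 y2) ⇑φ) :=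
  hom_is_leibniz_rep_general t hfund θ hR1 hR2
end

section
/- Let g be a Lie triple system over an infinite field F with char F ≠ 2, 3 and ω : g × g × g → g a trilinear map. Then the deformed bracket [x,y,z]_λ := [x,y,z] + λ·ω(x,y,z) makes g a Lie triple system for every λ ∈ F if and only if the following both hold: (i) ω itself defines a Lie triple system structure on g (ω(x,x,y) = 0, ω(x,y,z) + ω(y,z,x) + ω(z,x,y) = 0, and ω(x1,x2,ω(y1,y2,y3)) = ω(ω(x1,x2,y1),y2,y3) + ω(y1,ω(x1,x2,y2),y3) + ω(y1,y2,ω(x1,x2,y3))); and (ii) ω is a 3-cocycle of g with coefficients in the adjoint representation, i.e. ω(x1,x2,[y1,y2,y3]) + [x1,x2,ω(y1,y2,y3)] = ω([x1,x2,y1],y2,y3) + ω(y1,[x1,x2,y2],y3) + ω(y1,y2,[x1,x2,y3]) + [ω(x1,x2,y1),y2,y3] + [y1,ω(x1,x2,y2),y3] + [y1,y2,ω(x1,x2,y3)] for all xi, yi ∈ g. -/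
/-!
Expanding in `λ`, each Lie triple system axiom for `[·,·,·] + λ • ω` is a polynomial identity in
`λ` of degree at most two. Its coefficients are the axioms for `[·,·,·]`, the cocycle condition,
and the axioms for `ω`; evaluating at `λ = 0, 1, 2` separates them, since the Vandermonde
determinant of these points is `2`.
-/

section Polynomial

variable {R M : Type*} [CommRing R] [AddCommGroup M] [Module R M] {a b c : M}

theorem forall_add_smul_eq_zero_iff : (∀ r : R, a + r • b = 0) ↔ a = 0 ∧ b = 0 := by
  refine ⟨fun h => ?_, fun ⟨ha, hb⟩ r => by simp [ha, hb]⟩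
  have ha : a = 0 := by simpa using h 0
  exact ⟨ha, by simpa [ha] using h 1⟩

theorem forall_add_smul_add_sq_smul_eq_zero_iff (h2 : IsSMulRegular M (2 : R)) :
    (∀ r : R, a + r • b + r ^ 2 • c = 0) ↔ a = 0 ∧ b = 0 ∧ c = 0 := by
  refine ⟨fun h => ?_, fun ⟨ha, hb, hc⟩ r => by simp [ha, hb, hc]⟩
  have ha : a = 0 := by simpa using h 0
  have h1 : b + c = 0 := by simpa [ha] using h 1
  have hc : c = 0 := h2 <| by
    linear_combination (norm := module) h 2 - ha - (2 : R) • h1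
  exact ⟨ha, by simpa [hc] using h1, hc⟩

end Polynomial

section LieTripleSystem

variable {R M : Type*} [CommRing R] [AddCommGroup M] [Module R M]

def IsLieTripleBracket (b : M →ₗ[R] M →ₗ[R] M →ₗ[R] M) : Prop :=
  (∀ x y : M, b x x y = 0) ∧
  (∀ x y z : M, b x y z + b y z x + b z x y = 0) ∧
  (∀ x1 x2 y1 y2 y3 : M,
    b x1 x2 (b y1 y2 y3) = b (b x1 x2 y1) y2 y3 + b y1 (b x1 x2 y2) y3 + b y1 y2 (b x1 x2 y3))

def IsLieTripleCocycle (t ω : M →ₗ[R] M →ₗ[R] M →ₗ[R] M) : Prop :=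
  ∀ x1 x2 y1 y2 y3 : M,
    ω x1 x2 (t y1 y2 y3) + t x1 x2 (ω y1 y2 y3) =
      ω (t x1 x2 y1) y2 y3 + ω y1 (t x1 x2 y2) y3 + ω y1 y2 (t x1 x2 y3) +
        t (ω x1 x2 y1) y2 y3 + t y1 (ω x1 x2 y2) y3 + t y1 y2 (ω x1 x2 y3)

def derivationDefect (u v : M →ₗ[R] M →ₗ[R] M →ₗ[R] M) (x1 x2 y1 y2 y3 : M) : M :=
  u x1 x2 (v y1 y2 y3) - (v (u x1 x2 y1) y2 y3 + v y1 (u x1 x2 y2) y3 + v y1 y2 (u x1 x2 y3))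

theorem fundamental_iff_derivationDefect_eq_zero (b : M →ₗ[R] M →ₗ[R] M →ₗ[R] M)
    (x1 x2 y1 y2 y3 : M) :
    b x1 x2 (b y1 y2 y3) = b (b x1 x2 y1) y2 y3 + b y1 (b x1 x2 y2) y3 + b y1 y2 (b x1 x2 y3) ↔
      derivationDefect b b x1 x2 y1 y2 y3 = 0 :=
  sub_eq_zero.symm

variable (t ω : M →ₗ[R] M →ₗ[R] M →ₗ[R] M)

theorem isLieTripleCocycle_iff_derivationDefect :
    IsLieTripleCocycle t ω ↔ ∀ x1 x2 y1 y2 y3 : M,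
      derivationDefect t ω x1 x2 y1 y2 y3 + derivationDefect ω t x1 x2 y1 y2 y3 = 0 := by
  refine forall₅_congr fun x1 x2 y1 y2 y3 => ?_
  rw [← sub_eq_zero]
  apply Eq.congr_left
  simp only [derivationDefect]
  abel

theorem cyclic_sum_add_smul (r : R) (x y z : M) :
    (t + r • ω) x y z + (t + r • ω) y z x + (t + r • ω) z x y =
      (t x y z + t y z x + t z x y) + r • (ω x y z + ω y z x + ω z x y) := by
  simp only [LinearMap.add_apply, LinearMap.smul_apply]
  module

theorem derivationDefect_add_smul (r : R) (x1 x2 y1 y2 y3 : M) :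
    derivationDefect (t + r • ω) (t + r • ω) x1 x2 y1 y2 y3 =
      derivationDefect t t x1 x2 y1 y2 y3 +
        r • (derivationDefect t ω x1 x2 y1 y2 y3 + derivationDefect ω t x1 x2 y1 y2 y3) +
          r ^ 2 • derivationDefect ω ω x1 x2 y1 y2 y3 := by
  simp only [derivationDefect, LinearMap.add_apply, LinearMap.smul_apply, map_add, map_smul]
  module

theorem forall_isLieTripleBracket_add_smul_iff (h2 : IsSMulRegular M (2 : R)) :
    (∀ r : R, IsLieTripleBracket (t + r • ω)) ↔
      IsLieTripleBracket t ∧ IsLieTripleBracket ω ∧ IsLieTripleCocycle t ω := by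
  have skew (x y : M) : (∀ r : R, (t + r • ω) x x y = 0) ↔ t x x y = 0 ∧ ω x x y = 0 := by
    simpa using forall_add_smul_eq_zero_iff
  have cyclic (x y z : M) :
      (∀ r : R, (t + r • ω) x y z + (t + r • ω) y z x + (t + r • ω) z x y = 0) ↔
        t x y z + t y z x + t z x y = 0 ∧ ω x y z + ω y z x + ω z x y = 0 := by
    simpa only [cyclic_sum_add_smul] using forall_add_smul_eq_zero_iff
  have fundamental (x1 x2 y1 y2 y3 : M) :
      (∀ r : R, derivationDefect (t + r • ω) (t + r • ω) x1 x2 y1 y2 y3 = 0) ↔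
        derivationDefect t t x1 x2 y1 y2 y3 = 0 ∧
          derivationDefect t ω x1 x2 y1 y2 y3 + derivationDefect ω t x1 x2 y1 y2 y3 = 0 ∧
            derivationDefect ω ω x1 x2 y1 y2 y3 = 0 := by
    simpa only [derivationDefect_add_smul] using forall_add_smul_add_sq_smul_eq_zero_iff h2
  simp only [IsLieTripleBracket, isLieTripleCocycle_iff_derivationDefect,
    fundamental_iff_derivationDefect_eq_zero, forall_and, forall_comm (α := R), skew, cyclic,
    fundamental]
  tauto

end LieTripleSystem

theorem deformation_iff_cocycle_and_LTS_general {F : Type*} [Field F]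
    (hchar2 : (2 : F) ≠ 0)
    {g : Type*} [AddCommGroup g] [Module F g]
    (t : g →ₗ[F] g →ₗ[F] g →ₗ[F] g)
    (hskew : ∀ x y : g, t x x y = 0)
    (hjac : ∀ x y z : g, t x y z + t y z x + t z x y = 0)
    (hfund : ∀ x y a b c : g,
      t x y (t a b c) = t (t x y a) b c + t a (t x y b) c + t a b (t x y c))
    (ω : g →ₗ[F] g →ₗ[F] g →ₗ[F] g) :
    (∀ (lam : F) (b : g → g → g → g),
      (∀ x y z : g, b x y z = t x y z + lam • ω x y z) →
      ((∀ x y : g, b x x y = 0) ∧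
       (∀ x y z : g, b x y z + b y z x + b z x y = 0) ∧
       (∀ x1 x2 y1 y2 y3 : g,
         b x1 x2 (b y1 y2 y3) =
           b (b x1 x2 y1) y2 y3 + b y1 (b x1 x2 y2) y3 + b y1 y2 (b x1 x2 y3)))) ↔
    -- (i) ω defines a Lie triple system structure on g:
    ((∀ x y : g, ω x x y = 0) ∧
     (∀ x y z : g, ω x y z + ω y z x + ω z x y = 0) ∧
     (∀ x1 x2 y1 y2 y3 : g,
       ω x1 x2 (ω y1 y2 y3) =
         ω (ω x1 x2 y1) y2 y3 + ω y1 (ω x1 x2 y2) y3 + ω y1 y2 (ω x1 x2 y3)) ∧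
     -- (ii) ω is a 3-cocycle with coefficients in the adjoint representation:
     (∀ x1 x2 y1 y2 y3 : g,
       ω x1 x2 (t y1 y2 y3) + t x1 x2 (ω y1 y2 y3) =
         ω (t x1 x2 y1) y2 y3 + ω y1 (t x1 x2 y2) y3 + ω y1 y2 (t x1 x2 y3) +
           t (ω x1 x2 y1) y2 y3 + t y1 (ω x1 x2 y2) y3 + t y1 y2 (ω x1 x2 y3))) := by
  have hb (lam : F) (b : g → g → g → g) :
      (∀ x y z : g, b x y z = t x y z + lam • ω x y z) ↔ b = fun x y z => (t + lam • ω) x y z := by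
    simp only [funext_iff, LinearMap.add_apply, LinearMap.smul_apply]
  simp only [hb, forall_eq]
  change (∀ lam : F, IsLieTripleBracket (t + lam • ω)) ↔ _
  rw [forall_isLieTripleBracket_add_smul_iff t ω (.of_ne_zero hchar2),
    and_iff_right ⟨hskew, hjac, hfund⟩]
  simp only [IsLieTripleBracket, IsLieTripleCocycle, and_assoc]

theorem deformation_iff_cocycle_and_LTS {F : Type*} [Field F] [Infinite F]
    (hchar2 : (2 : F) ≠ 0) (hchar3 : (3 : F) ≠ 0)
    {g : Type*} [AddCommGroup g] [Module F g]
    (t : g →ₗ[F] g →ₗ[F] g →ₗ[F] g)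
    (hskew : ∀ x y : g, t x x y = 0)
    (hjac : ∀ x y z : g, t x y z + t y z x + t z x y = 0)
    (hfund : ∀ x y a b c : g,
      t x y (t a b c) = t (t x y a) b c + t a (t x y b) c + t a b (t x y c))
    (ω : g →ₗ[F] g →ₗ[F] g →ₗ[F] g) :
    (∀ (lam : F) (b : g → g → g → g),
      (∀ x y z : g, b x y z = t x y z + lam • ω x y z) →
      ((∀ x y : g, b x x y = 0) ∧
       (∀ x y z : g, b x y z + b y z x + b z x y = 0) ∧
       (∀ x1 x2 y1 y2 y3 : g,
         b x1 x2 (b y1 y2 y3) =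
           b (b x1 x2 y1) y2 y3 + b y1 (b x1 x2 y2) y3 + b y1 y2 (b x1 x2 y3)))) ↔
    -- (i) ω defines a Lie triple system structure on g:
    ((∀ x y : g, ω x x y = 0) ∧
     (∀ x y z : g, ω x y z + ω y z x + ω z x y = 0) ∧
     (∀ x1 x2 y1 y2 y3 : g,
       ω x1 x2 (ω y1 y2 y3) =
         ω (ω x1 x2 y1) y2 y3 + ω y1 (ω x1 x2 y2) y3 + ω y1 y2 (ω x1 x2 y3)) ∧
     -- (ii) ω is a 3-cocycle with coefficients in the adjoint representation:
     (∀ x1 x2 y1 y2 y3 : g,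
       ω x1 x2 (t y1 y2 y3) + t x1 x2 (ω y1 y2 y3) =
         ω (t x1 x2 y1) y2 y3 + ω y1 (t x1 x2 y2) y3 + ω y1 y2 (t x1 x2 y3) +
           t (ω x1 x2 y1) y2 y3 + t y1 (ω x1 x2 y2) y3 + t y1 y2 (ω x1 x2 y3))) :=
  deformation_iff_cocycle_and_LTS_general hchar2 t hskew hjac hfund ω
end

section
/- Let ĝ and g be Lie triple systems over a field F with char F ≠ 2, 3, let p : ĝ → g be a surjective linear map with p([a,b,c]_ĝ) = [p(a),p(b),p(c)]_g such that h := ker p is abelian ([a,b,c]_ĝ = 0 whenever at least two of a,b,c lie in h), and let σ : g → ĝ be a linear section of p. For x1, x2 ∈ g and u ∈ h define θ(x1,x2)(u) := [u, σ(x1), σ(x2)]_ĝ and D(x1,x2)(u) := [σ(x1), σ(x2), u]_ĝ. Then θ(x1,x2)(u) and D(x1,x2)(u) lie in h, D(x1,x2) = θ(x2,x1) − θ(x1,x2) as maps on h, and (h, θ) is a representation of g: (R1) D(x1,x2)∘θ(y1,y2) − θ(y1,y2)∘D(x1,x2) = θ([x1,x2,y1],y2) + θ(y1,[x1,x2,y2])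 and (R2) θ(x1,[y1,y2,y3]) = θ(y2,y3)∘θ(x1,y1) − θ(y1,y3)∘θ(x1,y2) + D(y1,y2)∘θ(x1,y3) hold as maps on h for all xi, yi ∈ g. -/
/-! The kernel `h` of `p` is killed by every bracket with two entries in `h`, so in a bracket
with one entry `u ∈ h` the other two entries only matter modulo `h`. In particular
`[σ a, σ b, σ c]` may be replaced by `σ [a, b, c]` there, and (R1) and (R2) become the fundamental
identity of `ĝ` applied to `u` and elements of `σ(g)`, while the formula for `D` is the Jacobi
identity combined with skew-symmetry. -/

namespace LieTripleSystem

section Bracket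

variable {R M : Type*} [CommRing R] [AddCommGroup M] [Module R M]
  {t : M →ₗ[R] M →ₗ[R] M →ₗ[R] M}

theorem swap_of_apply_self (hskew : ∀ x y : M, t x x y = 0) (a b c : M) :
    t b a c = -t a b c := by
  have h := hskew (a + b) c
  simp only [map_add, LinearMap.add_apply, hskew, zero_add, add_zero] at h
  exact eq_neg_of_add_eq_zero_left h

theorem apply_eq_sub_of_jacobi (hskew : ∀ x y : M, t x x y = 0)
    (hjac : ∀ x y z : M, t x y z + t y z x + t z x y = 0) (a b u : M) :
    t a b u = t u b a - t u a b := by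
  have h := hjac a b u
  rw [swap_of_apply_self hskew u b a] at h
  linear_combination (norm := abel) h

end Bracket

section AbelianExtension

variable {R G g : Type*} [CommRing R] [AddCommGroup G] [Module R G] [AddCommGroup g] [Module R g]
  {tG : G →ₗ[R] G →ₗ[R] G →ₗ[R] G} {tg : g →ₗ[R] g →ₗ[R] g →ₗ[R] g} {p : G →ₗ[R] g}

theorem apply_ker_congr_middle
    (habel : ∀ a b c : G,
      ((p a = 0 ∧ p b = 0) ∨ (p a = 0 ∧ p c = 0) ∨ (p b = 0 ∧ p c = 0)) → tG a b c = 0)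
    {u b b' : G} (hu : p u = 0) (hb : p b = p b') (c : G) :
    tG u b c = tG u b' c := by
  have h := habel u (b - b') c (Or.inl ⟨hu, by rw [map_sub, hb, sub_self]⟩)
  rwa [map_sub, LinearMap.sub_apply, sub_eq_zero] at h

theorem apply_ker_congr_right
    (habel : ∀ a b c : G,
      ((p a = 0 ∧ p b = 0) ∨ (p a = 0 ∧ p c = 0) ∨ (p b = 0 ∧ p c = 0)) → tG a b c = 0)
    {u c c' : G} (hu : p u = 0) (b : G) (hc : p c = p c') :
    tG u b c = tG u b c' := by
  have h := habel u b (c - c') (Or.inr (Or.inl ⟨hu, by rw [map_sub, hc, sub_self]⟩))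
  rwa [map_sub, sub_eq_zero] at h

variable {σ : g →ₗ[R] G}

theorem map_apply_section (hp : ∀ a b c : G, p (tG a b c) = tg (p a) (p b) (p c))
    (hσ : ∀ x : g, p (σ x) = x) (a b c : g) :
    p (tG (σ a) (σ b) (σ c)) = p (σ (tg a b c)) := by
  rw [hp, hσ, hσ, hσ, hσ]

theorem representation_R1
    (hfund : ∀ x y a b c : G,
      tG x y (tG a b c) = tG (tG x y a) b c + tG a (tG x y b) c + tG a b (tG x y c))
    (hp : ∀ a b c : G, p (tG a b c) = tg (p a) (p b) (p c))
    (habel : ∀ a b c : G,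
      ((p a = 0 ∧ p b = 0) ∨ (p a = 0 ∧ p c = 0) ∨ (p b = 0 ∧ p c = 0)) → tG a b c = 0)
    (hσ : ∀ x : g, p (σ x) = x) (x1 x2 y1 y2 : g) {u : G} (hu : p u = 0) :
    tG (σ x1) (σ x2) (tG u (σ y1) (σ y2)) - tG (tG (σ x1) (σ x2) u) (σ y1) (σ y2) =
      tG u (σ (tg x1 x2 y1)) (σ y2) + tG u (σ y1) (σ (tg x1 x2 y2)) := by
  have h := hfund (σ x1) (σ x2) u (σ y1) (σ y2)
  rw [apply_ker_congr_middle habel hu (map_apply_section hp hσ x1 x2 y1),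
    apply_ker_congr_right habel hu _ (map_apply_section hp hσ x1 x2 y2)] at h
  linear_combination (norm := abel) h

theorem representation_R2 (hskew : ∀ x y : G, tG x x y = 0)
    (hfund : ∀ x y a b c : G,
      tG x y (tG a b c) = tG (tG x y a) b c + tG a (tG x y b) c + tG a b (tG x y c))
    (hp : ∀ a b c : G, p (tG a b c) = tg (p a) (p b) (p c))
    (habel : ∀ a b c : G,
      ((p a = 0 ∧ p b = 0) ∨ (p a = 0 ∧ p c = 0) ∨ (p b = 0 ∧ p c = 0)) → tG a b c = 0)
    (hσ : ∀ x : g, p (σ x) = x) (x1 y1 y2 y3 : g) {u : G} (hu : p u = 0) :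
    tG u (σ x1) (σ (tg y1 y2 y3)) =
      tG (tG u (σ x1) (σ y1)) (σ y2) (σ y3) - tG (tG u (σ x1) (σ y2)) (σ y1) (σ y3) +
        tG (σ y1) (σ y2) (tG u (σ x1) (σ y3)) := by
  rw [← apply_ker_congr_right habel hu _ (map_apply_section hp hσ y1 y2 y3),
    hfund, swap_of_apply_self hskew (σ y1)]
  abel

end AbelianExtension

end LieTripleSystem

open LieTripleSystem in
theorem extension_gives_representation_general {F : Type*} [Field F]
    {G : Type*} [AddCommGroup G] [Module F G]
    {g : Type*} [AddCommGroup g] [Module F g]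
    (tG : G →ₗ[F] G →ₗ[F] G →ₗ[F] G)
    (hskewG : ∀ x y : G, tG x x y = 0)
    (hjacG : ∀ x y z : G, tG x y z + tG y z x + tG z x y = 0)
    (hfundG : ∀ x y a b c : G,
      tG x y (tG a b c) = tG (tG x y a) b c + tG a (tG x y b) c + tG a b (tG x y c))
    (tg : g →ₗ[F] g →ₗ[F] g →ₗ[F] g)
    (p : G →ₗ[F] g)
    (hp : ∀ a b c : G, p (tG a b c) = tg (p a) (p b) (p c))
    (habel : ∀ a b c : G,
      ((p a = 0 ∧ p b = 0) ∨ (p a = 0 ∧ p c = 0) ∨ (p b = 0 ∧ p c = 0)) →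
        tG a b c = 0)
    (σ : g →ₗ[F] G) (hσ : ∀ x : g, p (σ x) = x) :
    -- θ and D take values in h = ker p:
    (∀ (x1 x2 : g) (u : G), p u = 0 →
      p (tG u (σ x1) (σ x2)) = 0 ∧ p (tG (σ x1) (σ x2) u) = 0) ∧
    -- D(x1,x2) = θ(x2,x1) − θ(x1,x2) on h:
    (∀ (x1 x2 : g) (u : G), p u = 0 →
      tG (σ x1) (σ x2) u = tG u (σ x2) (σ x1) - tG u (σ x1) (σ x2)) ∧
    -- (R1) as maps on h:
    (∀ (x1 x2 y1 y2 : g) (u : G), p u = 0 →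
      tG (σ x1) (σ x2) (tG u (σ y1) (σ y2)) -
        tG (tG (σ x1) (σ x2) u) (σ y1) (σ y2) =
        tG u (σ (tg x1 x2 y1)) (σ y2) + tG u (σ y1) (σ (tg x1 x2 y2))) ∧
    -- (R2) as maps on h:
    (∀ (x1 y1 y2 y3 : g) (u : G), p u = 0 →
      tG u (σ x1) (σ (tg y1 y2 y3)) =
        tG (tG u (σ x1) (σ y1)) (σ y2) (σ y3) -
          tG (tG u (σ x1) (σ y2)) (σ y1) (σ y3) +
          tG (σ y1) (σ y2) (tG u (σ x1) (σ y3))) :=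
  ⟨fun x1 x2 u hu => by simp [hp, hσ, hu],
    fun x1 x2 u _ => apply_eq_sub_of_jacobi hskewG hjacG (σ x1) (σ x2) u,
    fun x1 x2 y1 y2 _ hu => representation_R1 hfundG hp habel hσ x1 x2 y1 y2 hu,
    fun x1 y1 y2 y3 _ hu => representation_R2 hskewG hfundG hp habel hσ x1 y1 y2 y3 hu⟩

theorem extension_gives_representation {F : Type*} [Field F]
    (hchar2 : (2 : F) ≠ 0) (hchar3 : (3 : F) ≠ 0)
    {G : Type*} [AddCommGroup G] [Module F G]
    {g : Type*} [AddCommGroup g] [Module F g]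
    (tG : G →ₗ[F] G →ₗ[F] G →ₗ[F] G)
    (hskewG : ∀ x y : G, tG x x y = 0)
    (hjacG : ∀ x y z : G, tG x y z + tG y z x + tG z x y = 0)
    (hfundG : ∀ x y a b c : G,
      tG x y (tG a b c) = tG (tG x y a) b c + tG a (tG x y b) c + tG a b (tG x y c))
    (tg : g →ₗ[F] g →ₗ[F] g →ₗ[F] g)
    (hskewg : ∀ x y : g, tg x x y = 0)
    (hjacg : ∀ x y z : g, tg x y z + tg y z x + tg z x y = 0)
    (hfundg : ∀ x y a b c : g,
      tg x y (tg a b c) = tg (tg x y a) b c + tg a (tg x y b) c + tg a b (tg x y c))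
    (p : G →ₗ[F] g) (hsurj : Function.Surjective p)
    (hp : ∀ a b c : G, p (tG a b c) = tg (p a) (p b) (p c))
    (habel : ∀ a b c : G,
      ((p a = 0 ∧ p b = 0) ∨ (p a = 0 ∧ p c = 0) ∨ (p b = 0 ∧ p c = 0)) →
        tG a b c = 0)
    (σ : g →ₗ[F] G) (hσ : ∀ x : g, p (σ x) = x) :
    -- θ and D take values in h = ker p:
    (∀ (x1 x2 : g) (u : G), p u = 0 →
      p (tG u (σ x1) (σ x2)) = 0 ∧ p (tG (σ x1) (σ x2) u) = 0) ∧
    -- D(x1,x2) = θ(x2,x1) − θ(x1,x2) on h: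
    (∀ (x1 x2 : g) (u : G), p u = 0 →
      tG (σ x1) (σ x2) u = tG u (σ x2) (σ x1) - tG u (σ x1) (σ x2)) ∧
    -- (R1) as maps on h:
    (∀ (x1 x2 y1 y2 : g) (u : G), p u = 0 →
      tG (σ x1) (σ x2) (tG u (σ y1) (σ y2)) -
        tG (tG (σ x1) (σ x2) u) (σ y1) (σ y2) =
        tG u (σ (tg x1 x2 y1)) (σ y2) + tG u (σ y1) (σ (tg x1 x2 y2))) ∧
    -- (R2) as maps on h:
    (∀ (x1 y1 y2 y3 : g) (u : G), p u = 0 →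
      tG u (σ x1) (σ (tg y1 y2 y3)) =
        tG (tG u (σ x1) (σ y1)) (σ y2) (σ y3) -
          tG (tG u (σ x1) (σ y2)) (σ y1) (σ y3) +
          tG (σ y1) (σ y2) (tG u (σ x1) (σ y3))) :=
  extension_gives_representation_general tG hskewG hjacG hfundG tg p hp habel σ hσ
end

section
/- Let ĝ and g be Lie triple systems over a field F with char F ≠ 2, 3, let p : ĝ → g be a surjective linear map with p([a,b,c]_ĝ) = [p(a),p(b),p(c)]_g such that h := ker p is abelian ([a,b,c]_ĝ = 0 whenever at least two of a,b,c lie in h), and let σ : g → ĝ be a linear section of p. Define ω(x1,x2,x3) := [σ(x1),σ(x2),σ(x3)]_ĝ − σ([x1,x2,x3]_g), θ(x1,x2)(u) := [u, σ(x1), σ(x2)]_ĝ and D(x1,x2)(u) := [σ(x1), σ(x2), u]_ĝ for u ∈ h. Then ω takes values in h and is a 3-cocycle of g with coefficients in h: ω(x,x,y) = 0, ω(x,y,z) + ω(y,z,x) + ω(z,x,y) = 0, and ω(x1,x2,[y1,y2,y3]) + D(x1,x2)ω(y1,y2,y3) = ω([x1,x2,y1],y2,y3) + ω(y1,[x1,x2,y2],y3)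 + ω(y1,y2,[x1,x2,y3]) + θ(y2,y3)ω(x1,x2,y1) − θ(y1,y3)ω(x1,x2,y2) + D(y1,y2)ω(x1,x2,y3) for all xi, yi ∈ g. -/
/-!
The identities for `ω` are obtained by applying `σ` to an axiom of `g` and subtracting it from
the same axiom in `ĝ` evaluated at `σ`-lifts: everything that is not a bracket of three lifts
cancels telescopically. For the fundamental identity the two terms in which a bracket sits in the
middle slot are brought to the first slot by skew-symmetry, which produces the `θ`-terms.
-/

section SectionCocycle

variable {R : Type*} [CommRing R] {M N : Type*} [AddCommGroup M] [Module R M]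
  [AddCommGroup N] [Module R N]

theorem LinearMap.trilinear_swap_of_self_left (t : M →ₗ[R] M →ₗ[R] M →ₗ[R] N)
    (ht : ∀ x y, t x x y = 0) (x y z : M) : t x y z = -t y x z := by
  have h := ht (x + y) z
  simp only [map_add, LinearMap.add_apply, ht, zero_add, add_zero] at h
  exact eq_neg_of_add_eq_zero_right h

variable {G g : Type*} [AddCommGroup G] [Module R G] [AddCommGroup g] [Module R g]

def sectionCocycle (tG : G →ₗ[R] G →ₗ[R] G →ₗ[R] G) (tg : g →ₗ[R] g →ₗ[R] g →ₗ[R] g)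
    (σ : g →ₗ[R] G) (x y z : g) : G :=
  tG (σ x) (σ y) (σ z) - σ (tg x y z)

variable (tG : G →ₗ[R] G →ₗ[R] G →ₗ[R] G) (tg : g →ₗ[R] g →ₗ[R] g →ₗ[R] g) (σ : g →ₗ[R] G)

theorem map_sectionCocycle_eq_zero (p : G →ₗ[R] g)
    (hp : ∀ a b c, p (tG a b c) = tg (p a) (p b) (p c)) (hσ : ∀ x, p (σ x) = x) (x y z : g) :
    p (sectionCocycle tG tg σ x y z) = 0 := by
  rw [sectionCocycle, map_sub, hp, hσ, hσ, hσ, hσ, sub_self]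

theorem sectionCocycle_self_left (hskewG : ∀ a b, tG a a b = 0) (hskewg : ∀ x y, tg x x y = 0)
    (x y : g) : sectionCocycle tG tg σ x x y = 0 := by
  rw [sectionCocycle, hskewG, hskewg, map_zero, sub_zero]

theorem sectionCocycle_cyclic (hjacG : ∀ a b c, tG a b c + tG b c a + tG c a b = 0)
    (hjacg : ∀ x y z, tg x y z + tg y z x + tg z x y = 0) (x y z : g) :
    sectionCocycle tG tg σ x y z + sectionCocycle tG tg σ y z x +
      sectionCocycle tG tg σ z x y = 0 := by
  have hσjac : σ (tg x y z) + σ (tg y z x) + σ (tg z x y) = 0 := by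
    rw [← map_add, ← map_add, hjacg, map_zero]
  calc _ = (tG (σ x) (σ y) (σ z) + tG (σ y) (σ z) (σ x) + tG (σ z) (σ x) (σ y)) -
        (σ (tg x y z) + σ (tg y z x) + σ (tg z x y)) := by
          simp only [sectionCocycle]; abel
    _ = 0 := by rw [hjacG, hσjac, sub_zero]

theorem sectionCocycle_fundamental (hskewG : ∀ a b, tG a a b = 0)
    (hfundG : ∀ x y a b c,
      tG x y (tG a b c) = tG (tG x y a) b c + tG a (tG x y b) c + tG a b (tG x y c))
    (hfundg : ∀ x y a b c,
      tg x y (tg a b c) = tg (tg x y a) b c + tg a (tg x y b) c + tg a b (tg x y c))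
    (x1 x2 y1 y2 y3 : g) :
    let ω := sectionCocycle tG tg σ
    ω x1 x2 (tg y1 y2 y3) + tG (σ x1) (σ x2) (ω y1 y2 y3) =
      ω (tg x1 x2 y1) y2 y3 + ω y1 (tg x1 x2 y2) y3 + ω y1 y2 (tg x1 x2 y3) +
        tG (ω x1 x2 y1) (σ y2) (σ y3) - tG (ω x1 x2 y2) (σ y1) (σ y3) +
        tG (σ y1) (σ y2) (ω x1 x2 y3) := by
  have swap := tG.trilinear_swap_of_self_left hskewG
  simp only [sectionCocycle, map_sub, LinearMap.sub_apply]
  rw [hfundG, hfundg, map_add, map_add, swap (σ (tg x1 x2 y2)), swap (σ y1)]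
  abel

end SectionCocycle

theorem extension_gives_cocycle_general {F : Type*} [Field F]
    {G : Type*} [AddCommGroup G] [Module F G]
    {g : Type*} [AddCommGroup g] [Module F g]
    (tG : G →ₗ[F] G →ₗ[F] G →ₗ[F] G)
    (hskewG : ∀ x y : G, tG x x y = 0)
    (hjacG : ∀ x y z : G, tG x y z + tG y z x + tG z x y = 0)
    (hfundG : ∀ x y a b c : G,
      tG x y (tG a b c) = tG (tG x y a) b c + tG a (tG x y b) c + tG a b (tG x y c))
    (tg : g →ₗ[F] g →ₗ[F] g →ₗ[F] g)
    (hskewg : ∀ x y : g, tg x x y = 0)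
    (hjacg : ∀ x y z : g, tg x y z + tg y z x + tg z x y = 0)
    (hfundg : ∀ x y a b c : g,
      tg x y (tg a b c) = tg (tg x y a) b c + tg a (tg x y b) c + tg a b (tg x y c))
    (p : G →ₗ[F] g)
    (hp : ∀ a b c : G, p (tG a b c) = tg (p a) (p b) (p c))
    (σ : g →ₗ[F] G) (hσ : ∀ x : g, p (σ x) = x)
    (ω : g → g → g → G)
    (hω : ∀ x1 x2 x3 : g,
      ω x1 x2 x3 = tG (σ x1) (σ x2) (σ x3) - σ (tg x1 x2 x3)) :
    -- ω takes values in h = ker p: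
    (∀ x1 x2 x3 : g, p (ω x1 x2 x3) = 0) ∧
    -- ω is a 3-cocycle:
    (∀ x y : g, ω x x y = 0) ∧
    (∀ x y z : g, ω x y z + ω y z x + ω z x y = 0) ∧
    (∀ x1 x2 y1 y2 y3 : g,
      ω x1 x2 (tg y1 y2 y3) + tG (σ x1) (σ x2) (ω y1 y2 y3) =
        ω (tg x1 x2 y1) y2 y3 + ω y1 (tg x1 x2 y2) y3 + ω y1 y2 (tg x1 x2 y3) +
          tG (ω x1 x2 y1) (σ y2) (σ y3) - tG (ω x1 x2 y2) (σ y1) (σ y3) +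
          tG (σ y1) (σ y2) (ω x1 x2 y3)) := by
  obtain rfl : ω = sectionCocycle tG tg σ := by
    funext x1 x2 x3
    exact hω x1 x2 x3
  exact ⟨map_sectionCocycle_eq_zero tG tg σ p hp hσ,
    sectionCocycle_self_left tG tg σ hskewG hskewg,
    sectionCocycle_cyclic tG tg σ hjacG hjacg,
    sectionCocycle_fundamental tG tg σ hskewG hfundG hfundg⟩

theorem extension_gives_cocycle {F : Type*} [Field F]
    (hchar2 : (2 : F) ≠ 0) (hchar3 : (3 : F) ≠ 0)
    {G : Type*} [AddCommGroup G] [Module F G]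
    {g : Type*} [AddCommGroup g] [Module F g]
    (tG : G →ₗ[F] G →ₗ[F] G →ₗ[F] G)
    (hskewG : ∀ x y : G, tG x x y = 0)
    (hjacG : ∀ x y z : G, tG x y z + tG y z x + tG z x y = 0)
    (hfundG : ∀ x y a b c : G,
      tG x y (tG a b c) = tG (tG x y a) b c + tG a (tG x y b) c + tG a b (tG x y c))
    (tg : g →ₗ[F] g →ₗ[F] g →ₗ[F] g)
    (hskewg : ∀ x y : g, tg x x y = 0)
    (hjacg : ∀ x y z : g, tg x y z + tg y z x + tg z x y = 0)
    (hfundg : ∀ x y a b c : g,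
      tg x y (tg a b c) = tg (tg x y a) b c + tg a (tg x y b) c + tg a b (tg x y c))
    (p : G →ₗ[F] g) (hsurj : Function.Surjective p)
    (hp : ∀ a b c : G, p (tG a b c) = tg (p a) (p b) (p c))
    (habel : ∀ a b c : G,
      ((p a = 0 ∧ p b = 0) ∨ (p a = 0 ∧ p c = 0) ∨ (p b = 0 ∧ p c = 0)) →
        tG a b c = 0)
    (σ : g →ₗ[F] G) (hσ : ∀ x : g, p (σ x) = x)
    (ω : g → g → g → G)
    (hω : ∀ x1 x2 x3 : g,
      ω x1 x2 x3 = tG (σ x1) (σ x2) (σ x3) - σ (tg x1 x2 x3)) :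
    -- ω takes values in h = ker p:
    (∀ x1 x2 x3 : g, p (ω x1 x2 x3) = 0) ∧
    -- ω is a 3-cocycle:
    (∀ x y : g, ω x x y = 0) ∧
    (∀ x y z : g, ω x y z + ω y z x + ω z x y = 0) ∧
    (∀ x1 x2 y1 y2 y3 : g,
      ω x1 x2 (tg y1 y2 y3) + tG (σ x1) (σ x2) (ω y1 y2 y3) =
        ω (tg x1 x2 y1) y2 y3 + ω y1 (tg x1 x2 y2) y3 + ω y1 y2 (tg x1 x2 y3) +
          tG (ω x1 x2 y1) (σ y2) (σ y3) - tG (ω x1 x2 y2) (σ y1) (σ y3) +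
          tG (σ y1) (σ y2) (ω x1 x2 y3)) :=
  extension_gives_cocycle_general tG hskewG hjacG hfundG tg hskewg hjacg hfundg p hp σ hσ ω hω
end

section
/- Let g be a Lie triple system over a field F with char F ≠ 2, 3, (V,θ) a representation of g with D(x,y) := θ(y,x) − θ(x,y), and ω : g × g × g → V a 3-cocycle. Then the direct sum g ⊕ V with the trilinear bracket [x1 + u1, x2 + u2, x3 + u3]_ω := [x1,x2,x3] + ω(x1,x2,x3) + D(x1,x2)(u3) − θ(x1,x3)(u2) + θ(x2,x3)(u1) (for xi ∈ g, ui ∈ V) is a Lie triple system. -/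
/-!
Every identity splits into its `g`-component, which is the corresponding axiom of `t`, and its
`V`-component. The latter is linear in the `V`-parts of the arguments plus a purely `ω`-part:
the `ω`-part is the matching cocycle condition, and in the fundamental identity
`[a,b,[x,y,z]] = …` the terms in the `V`-parts of `x, y, z` cancel by (R1), those in the
`V`-parts of `a, b` by (R2).
-/

namespace LieTripleSystem

variable {F : Type*} [Field F] {g V : Type*} [AddCommGroup g] [Module F g]
  [AddCommGroup V] [Module F V]

@[simp]
lemma Dop_apply (θ : g →ₗ[F] g →ₗ[F] Module.End F V) (x y : g) (v : V) :
    Dop θ x y v = θ y x v - θ x y v :=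
  rfl

def semidirectBracket (t : g →ₗ[F] g →ₗ[F] g →ₗ[F] g)
    (θ : g →ₗ[F] g →ₗ[F] Module.End F V) (ω : g →ₗ[F] g →ₗ[F] g →ₗ[F] V)
    (a b c : g × V) : g × V :=
  (t a.1 b.1 c.1, ω a.1 b.1 c.1 + Dop θ a.1 b.1 c.2 - θ a.1 c.1 b.2 + θ b.1 c.1 a.2)

variable (t : g →ₗ[F] g →ₗ[F] g →ₗ[F] g) (θ : g →ₗ[F] g →ₗ[F] Module.End F V)
  (ω : g →ₗ[F] g →ₗ[F] g →ₗ[F] V)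

lemma semidirectBracket_self (hskew : ∀ x y : g, t x x y = 0) (hω1 : ∀ x y : g, ω x x y = 0)
    (a b : g × V) : semidirectBracket t θ ω a a b = 0 := by
  ext <;> simp [semidirectBracket, hskew, hω1]

lemma semidirectBracket_cyclic (hjac : ∀ x y z : g, t x y z + t y z x + t z x y = 0)
    (hω2 : ∀ x y z : g, ω x y z + ω y z x + ω z x y = 0) (a b c : g × V) :
    semidirectBracket t θ ω a b c + semidirectBracket t θ ω b c a +
      semidirectBracket t θ ω c a b = 0 := by
  ext
  · exact hjac a.1 b.1 c.1
  · simp only [semidirectBracket, Prod.snd_add, Prod.snd_zero, Dop_apply]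
    linear_combination (norm := module) hω2 a.1 b.1 c.1

lemma semidirectBracket_fundamental
    (hfund : ∀ x y a b c : g,
      t x y (t a b c) = t (t x y a) b c + t a (t x y b) c + t a b (t x y c))
    (hR1 : ∀ x1 x2 y1 y2 : g,
      Dop θ x1 x2 * θ y1 y2 - θ y1 y2 * Dop θ x1 x2 =
        θ (t x1 x2 y1) y2 + θ y1 (t x1 x2 y2))
    (hR2 : ∀ x1 y1 y2 y3 : g,
      θ x1 (t y1 y2 y3) =
        θ y2 y3 * θ x1 y1 - θ y1 y3 * θ x1 y2 + Dop θ y1 y2 * θ x1 y3)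
    (hω3 : ∀ x1 x2 y1 y2 y3 : g,
      ω x1 x2 (t y1 y2 y3) + Dop θ x1 x2 (ω y1 y2 y3) =
        ω (t x1 x2 y1) y2 y3 + ω y1 (t x1 x2 y2) y3 + ω y1 y2 (t x1 x2 y3) +
          θ y2 y3 (ω x1 x2 y1) - θ y1 y3 (ω x1 x2 y2) +
          Dop θ y1 y2 (ω x1 x2 y3))
    (a b x y z : g × V) :
    semidirectBracket t θ ω a b (semidirectBracket t θ ω x y z) =
      semidirectBracket t θ ω (semidirectBracket t θ ω a b x) y z +
        semidirectBracket t θ ω x (semidirectBracket t θ ω a b y) z +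
        semidirectBracket t θ ω x y (semidirectBracket t θ ω a b z) := by
  have hR1_apply (p q r s : g) (v : V) :
      θ q p (θ r s v) - θ p q (θ r s v) - (θ r s (θ q p v) - θ r s (θ p q v)) =
        θ (t p q r) s v + θ r (t p q s) v := by
    simpa using LinearMap.congr_fun (hR1 p q r s) v
  have hR2_apply (p q r s : g) (v : V) :
      θ p (t q r s) v =
        θ r s (θ p q v) - θ q s (θ p r v) + (θ r q (θ p s v) - θ q r (θ p s v)) := by
    simpa using LinearMap.congr_fun (hR2 p q r s) v
  have hω3_apply := hω3 a.1 b.1 x.1 y.1 z.1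
  simp only [Dop_apply] at hω3_apply
  ext
  · exact hfund a.1 b.1 x.1 y.1 z.1
  · simp only [semidirectBracket, Prod.snd_add, Dop_apply, map_add, map_sub]
    linear_combination (norm := module) hω3_apply
      + hR1_apply a.1 b.1 y.1 x.1 z.2 - hR1_apply a.1 b.1 x.1 y.1 z.2
      - hR1_apply a.1 b.1 x.1 z.1 y.2 + hR1_apply a.1 b.1 y.1 z.1 x.2
      - hR2_apply a.1 x.1 y.1 z.1 b.2 + hR2_apply b.1 x.1 y.1 z.1 a.2

end LieTripleSystem

open LieTripleSystem in
theorem semidirect_sum_is_LTS_general {F : Type*} [Field F]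
    {g : Type*} [AddCommGroup g] [Module F g]
    (t : g →ₗ[F] g →ₗ[F] g →ₗ[F] g)
    (hskew : ∀ x y : g, t x x y = 0)
    (hjac : ∀ x y z : g, t x y z + t y z x + t z x y = 0)
    (hfund : ∀ x y a b c : g,
      t x y (t a b c) = t (t x y a) b c + t a (t x y b) c + t a b (t x y c))
    {V : Type*} [AddCommGroup V] [Module F V]
    (θ : g →ₗ[F] g →ₗ[F] Module.End F V)
    (hR1 : ∀ x1 x2 y1 y2 : g,
      Dop θ x1 x2 * θ y1 y2 - θ y1 y2 * Dop θ x1 x2 =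
        θ (t x1 x2 y1) y2 + θ y1 (t x1 x2 y2))
    (hR2 : ∀ x1 y1 y2 y3 : g,
      θ x1 (t y1 y2 y3) =
        θ y2 y3 * θ x1 y1 - θ y1 y3 * θ x1 y2 + Dop θ y1 y2 * θ x1 y3)
    (ω : g →ₗ[F] g →ₗ[F] g →ₗ[F] V)
    (hω1 : ∀ x y : g, ω x x y = 0)
    (hω2 : ∀ x y z : g, ω x y z + ω y z x + ω z x y = 0)
    (hω3 : ∀ x1 x2 y1 y2 y3 : g,
      ω x1 x2 (t y1 y2 y3) + Dop θ x1 x2 (ω y1 y2 y3) =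
        ω (t x1 x2 y1) y2 y3 + ω y1 (t x1 x2 y2) y3 + ω y1 y2 (t x1 x2 y3) +
          θ y2 y3 (ω x1 x2 y1) - θ y1 y3 (ω x1 x2 y2) +
          Dop θ y1 y2 (ω x1 x2 y3))
    (B : g × V → g × V → g × V → g × V)
    (hB : ∀ a b c : g × V,
      B a b c =
        (t a.1 b.1 c.1,
         ω a.1 b.1 c.1 + Dop θ a.1 b.1 c.2 - θ a.1 c.1 b.2 + θ b.1 c.1 a.2)) :
    (∀ a b : g × V, B a a b = 0) ∧
    (∀ a b c : g × V, B a b c + B b c a + B c a b = 0) ∧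
    (∀ a b x y z : g × V,
      B a b (B x y z) = B (B a b x) y z + B x (B a b y) z + B x y (B a b z)) := by
  obtain rfl : B = semidirectBracket t θ ω := funext₃ hB
  exact ⟨semidirectBracket_self t θ ω hskew hω1,
    semidirectBracket_cyclic t θ ω hjac hω2,
    semidirectBracket_fundamental t θ ω hfund hR1 hR2 hω3⟩

theorem semidirect_sum_is_LTS {F : Type*} [Field F]
    (hchar2 : (2 : F) ≠ 0) (hchar3 : (3 : F) ≠ 0)
    {g : Type*} [AddCommGroup g] [Module F g]
    (t : g →ₗ[F] g →ₗ[F] g →ₗ[F] g)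
    (hskew : ∀ x y : g, t x x y = 0)
    (hjac : ∀ x y z : g, t x y z + t y z x + t z x y = 0)
    (hfund : ∀ x y a b c : g,
      t x y (t a b c) = t (t x y a) b c + t a (t x y b) c + t a b (t x y c))
    {V : Type*} [AddCommGroup V] [Module F V]
    (θ : g →ₗ[F] g →ₗ[F] Module.End F V)
    (hR1 : ∀ x1 x2 y1 y2 : g,
      Dop θ x1 x2 * θ y1 y2 - θ y1 y2 * Dop θ x1 x2 =
        θ (t x1 x2 y1) y2 + θ y1 (t x1 x2 y2))
    (hR2 : ∀ x1 y1 y2 y3 : g,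
      θ x1 (t y1 y2 y3) =
        θ y2 y3 * θ x1 y1 - θ y1 y3 * θ x1 y2 + Dop θ y1 y2 * θ x1 y3)
    (ω : g →ₗ[F] g →ₗ[F] g →ₗ[F] V)
    (hω1 : ∀ x y : g, ω x x y = 0)
    (hω2 : ∀ x y z : g, ω x y z + ω y z x + ω z x y = 0)
    (hω3 : ∀ x1 x2 y1 y2 y3 : g,
      ω x1 x2 (t y1 y2 y3) + Dop θ x1 x2 (ω y1 y2 y3) =
        ω (t x1 x2 y1) y2 y3 + ω y1 (t x1 x2 y2) y3 + ω y1 y2 (t x1 x2 y3) +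
          θ y2 y3 (ω x1 x2 y1) - θ y1 y3 (ω x1 x2 y2) +
          Dop θ y1 y2 (ω x1 x2 y3))
    (B : g × V → g × V → g × V → g × V)
    (hB : ∀ a b c : g × V,
      B a b c =
        (t a.1 b.1 c.1,
         ω a.1 b.1 c.1 + Dop θ a.1 b.1 c.2 - θ a.1 c.1 b.2 + θ b.1 c.1 a.2)) :
    (∀ a b : g × V, B a a b = 0) ∧
    (∀ a b c : g × V, B a b c + B b c a + B c a b = 0) ∧
    (∀ a b x y z : g × V,
      B a b (B x y z) = B (B a b x) y z + B x (B a b y) z + B x y (B a b z)) :=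
  semidirect_sum_is_LTS_general t hskew hjac hfund θ hR1 hR2 ω hω1 hω2 hω3 B hB
end
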